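/- arXiv:math/0603718 — 2 statements merged into one kernel-verified Lean document; each statement's English description precedes it below -/
import Mathlib

section
/- If G is a finite simple graph with rank(G) = frank(G), then G has the primitive cycle property: any two distinct chordless cycles of G share at most one edge. -/
open SimpleGraph Finset
open scoped Classical

noncomputable section

namespace RingGraphs

variable {V : Type*}

/-- The boundary map from 1-chains (ZMod 2 combinations of edges) to 0-chains. -/
def chainBoundary [Fintype V] (G : SimpleGraph V) :
    (G.edgeSet → ZMod 2) →ₗ[ZMod 2] (V → ZMod 2) where
  toFun f v := ∑ e : G.edgeSet, if v ∈ (e : Sym2 V) then f e else 0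
  map_add' f g := by
    funext v
    simp only [Pi.add_apply]
    rw [← Finset.sum_add_distrib]
    exact Finset.sum_congr rfl (fun e _ => by split <;> simp)
  map_smul' c f := by
    funext v
    simp only [Pi.smul_apply, RingHom.id_apply, smul_eq_mul, Finset.mul_sum]
    exact Finset.sum_congr rfl (fun e _ => by split <;> simp)

/-- The cycle space `Z(G)` of a graph: the kernel of the boundary map. -/
def cycleSpace [Fintype V] (G : SimpleGraph V) : Submodule (ZMod 2) (G.edgeSet → ZMod 2) :=
  LinearMap.ker (chainBoundary G)

/-- The cycle rank: the dimension of the cycle space over `ZMod 2`. -/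
def cycRank [Fintype V] (G : SimpleGraph V) : ℕ :=
  Module.finrank (ZMod 2) (cycleSpace G)

/-- The cycle vector (indicator vector of the edge set) of a closed walk. -/
def cycleVector [Fintype V] (G : SimpleGraph V) {v : V} (c : G.Walk v v) :
    G.edgeSet → ZMod 2 :=
  fun e => if (e : Sym2 V) ∈ c.edges then 1 else 0

/-- A primitive (chordless) cycle: a cycle such that every edge of `G` joining two
vertices of the cycle is an edge of the cycle. -/
def IsPrimitiveCycle (G : SimpleGraph V) {v : V} (c : G.Walk v v) : Prop :=
  c.IsCycle ∧ ∀ x y, x ∈ c.support → y ∈ c.support → G.Adj x y → s(x, y) ∈ c.edges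

/-- The collection of edge sets of primitive cycles of `G`. -/
def primCycleEdgeSets (G : SimpleGraph V) : Set (Set (Sym2 V)) :=
  {s | ∃ (v : V) (c : G.Walk v v), IsPrimitiveCycle G c ∧ {e | e ∈ c.edges} = s}

/-- The free rank: the number of primitive (chordless) cycles of `G`. -/
def frank (G : SimpleGraph V) : ℕ := (primCycleEdgeSets G).ncard

/-- The set of cycle vectors of primitive cycles of `G`. -/
def primCycleVectors [Fintype V] (G : SimpleGraph V) : Set (G.edgeSet → ZMod 2) :=
  {w | ∃ (v : V) (c : G.Walk v v), IsPrimitiveCycle G c ∧ cycleVector G c = w}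


/-- The primitive cycle property (PCP): any two distinct primitive (chordless) cycles
intersect in at most one edge. -/
def PCP (G : SimpleGraph V) : Prop :=
  ∀ (u v : V) (c₁ : G.Walk u u) (c₂ : G.Walk v v),
    IsPrimitiveCycle G c₁ → IsPrimitiveCycle G c₂ →
    {e | e ∈ c₁.edges} ≠ {e | e ∈ c₂.edges} →
    ({e | e ∈ c₁.edges} ∩ {e | e ∈ c₂.edges}).ncard ≤ 1

/-! ### Auxiliary lemmas -/

lemma zmod2_eq_one {z : ZMod 2} (h : z ≠ 0) : z = 1 := by revert z; decide

lemma zmod2_add_self (z : ZMod 2) : z + z = 0 := by revert z; decide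

section Aux

variable [Fintype V] {G : SimpleGraph V}

/-- The cycle vector of a closed trail lies in the cycle space. -/
lemma cycleVector_mem_cycleSpace {v : V} {c : G.Walk v v} (hc : c.IsTrail) :
    cycleVector G c ∈ cycleSpace G := by
  classical
  rw [cycleSpace, LinearMap.mem_ker]
  funext x
  have h1 : ∀ e : G.edgeSet, (if x ∈ (e : Sym2 V) then cycleVector G c e else 0)
      = if (x ∈ (e : Sym2 V) ∧ (e : Sym2 V) ∈ c.edges) then 1 else 0 := by
    intro e
    simp only [cycleVector]
    by_cases h1 : x ∈ (e : Sym2 V) <;> by_cases h2 : (e : Sym2 V) ∈ c.edges <;>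
      simp [h1, h2]
  show (∑ e : G.edgeSet, if x ∈ (e : Sym2 V) then cycleVector G c e else 0) = 0
  rw [Finset.sum_congr rfl fun e _ => h1 e, Finset.sum_boole]
  have hcard : (Finset.univ.filter
      fun e : G.edgeSet => x ∈ (e : Sym2 V) ∧ (e : Sym2 V) ∈ c.edges).card
      = c.edges.countP (fun e => x ∈ e) := by
    rw [List.countP_eq_length_filter]
    have hnd : (c.edges.filter (fun e => x ∈ e)).Nodup := hc.edges_nodup.filter _
    rw [← List.toFinset_card_of_nodup hnd]
    refine Finset.card_bij (fun (e : G.edgeSet) (_ : e ∈ Finset.univ.filter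
      fun e : G.edgeSet => x ∈ (e : Sym2 V) ∧ (e : Sym2 V) ∈ c.edges) => (e : Sym2 V)) ?_ ?_ ?_
    · intro a ha
      simp only [Finset.mem_filter] at ha
      simp only [List.mem_toFinset, List.mem_filter]
      exact ⟨ha.2.2, by simpa using ha.2.1⟩
    · intro a _ b _ hab
      exact Subtype.ext hab
    · intro b hb
      simp only [List.mem_toFinset, List.mem_filter] at hb
      refine ⟨⟨b, Walk.edges_subset_edgeSet c hb.1⟩, ?_, rfl⟩
      simp only [Finset.mem_filter, Finset.mem_univ, true_and]
      exact ⟨by simpa using hb.2, hb.1⟩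
  rw [hcard]
  obtain ⟨k, hk⟩ := (hc.even_countP_edges_iff x).mpr (fun h => absurd rfl h)
  rw [hk]
  push_cast
  exact zmod2_add_self _

lemma length_rotate {v x : V} (c : G.Walk v v) (hx : x ∈ c.support) :
    (c.rotate x hx).length = c.length := by
  have h := congrArg Walk.length (c.take_spec hx)
  rw [Walk.length_append] at h
  simp only [Walk.rotate, Walk.length_append]
  omega

lemma end_mem_tail_of_closed {v : V} (c : G.Walk v v) (h : ¬ c.Nil) :
    v ∈ c.support.tail := by
  cases c with
  | nil => simp at h
  | cons hadj p =>
    rw [Walk.support_cons]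
    exact p.end_mem_support

lemma mem_support_rotate_iff {v x z : V} (c : G.Walk v v) (hnil : ¬ c.Nil)
    (hx : x ∈ c.support) : z ∈ (c.rotate x hx).support ↔ z ∈ c.support := by
  have h1 := (c.support_rotate x hx).mem_iff (a := z)
  have hvt : v ∈ c.support.tail := end_mem_tail_of_closed c hnil
  rw [(c.rotate x hx).support_eq_cons, c.support_eq_cons]
  simp only [List.mem_cons, h1]
  constructor
  · rintro (rfl | hz)
    · rw [c.support_eq_cons] at hx
      exact List.mem_cons.mp hx
    · exact Or.inr hz
  · rintro (rfl | hz)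
    · exact Or.inr hvt
    · exact Or.inr hz

lemma mem_edges_of_length_one {a b : V} (r : G.Walk a b) (h : r.length = 1) :
    s(a, b) ∈ r.edges := by
  cases r with
  | nil => simp at h
  | cons hadj p =>
    have hp : p.length = 0 := by simpa using h
    have hsup : b ∈ p.support := p.end_mem_support
    rw [p.support_eq_cons] at hsup
    have htl : p.support.tail = [] := by
      have h5 := p.length_support
      rw [p.support_eq_cons] at h5
      simp only [List.length_cons, hp] at h5
      have h6 : p.support.tail.length = 0 := by omega
      exact List.length_eq_zero_iff.mp h6
    rw [htl] at hsup
    simp only [List.mem_cons, List.not_mem_nil, or_false] at hsup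
    subst hsup
    simp

lemma one_le_length_of_end_mem_tail {a b z : V} (r : G.Walk a b)
    (h : z ∈ r.support.tail) : 1 ≤ r.length := by
  by_contra hlen
  have h0 : r.length = 0 := by omega
  have h5 := r.length_support
  rw [r.support_eq_cons] at h5
  simp only [List.length_cons, h0] at h5
  have h6 : r.support.tail.length = 0 := by omega
  rw [List.length_eq_zero_iff.mp h6] at h
  simp at h

/-- Splitting a cycle along a chord into two strictly shorter cycles, whose
cycle vectors sum to the original one. -/
lemma chord_split {v : V} {c : G.Walk v v} (hc : c.IsCycle)
    {x y : V} (hx : x ∈ c.support) (hy : y ∈ c.support) (hadj : G.Adj x y)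
    (hne : s(x, y) ∉ c.edges) :
    ∃ (c' : G.Walk y y) (c'' : G.Walk x x), c'.IsCycle ∧ c''.IsCycle ∧
      c'.length + c''.length = c.length + 2 ∧ c'.length < c.length ∧
      c''.length < c.length ∧
      cycleVector G c = cycleVector G c' + cycleVector G c'' := by
  classical
  have hxy : x ≠ y := hadj.ne
  have hcnil : ¬ c.Nil := hc.not_nil
  set rc := c.rotate x hx with hrc_def
  have hrc : rc.IsCycle := hc.rotate hx
  have hyr : y ∈ rc.support := (mem_support_rotate_iff c hcnil hx).mpr hy
  have hedge_iff : ∀ e, e ∈ rc.edges ↔ e ∈ c.edges := fun e =>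
    (c.rotate_edges x hx).mem_iff
  set p := rc.takeUntil y hyr with hp_def
  set q := rc.dropUntil y hyr with hq_def
  have hspec : p.append q = rc := rc.take_spec hyr
  have hlen_rc : rc.length = c.length := length_rotate c hx
  have hlenpq : p.length + q.length = c.length := by
    have h := congrArg Walk.length hspec
    rw [Walk.length_append] at h
    omega
  have htrail : rc.IsTrail := hrc.isCircuit.isTrail
  have hednodup : (p.edges ++ q.edges).Nodup := by
    rw [← Walk.edges_append, hspec]; exact htrail.edges_nodup
  have heddisj : ∀ e, e ∈ p.edges → e ∈ q.edges → False := fun e he1 he2 =>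
    (List.disjoint_of_nodup_append hednodup) he1 he2
  have htail : (p.support.tail ++ q.support.tail).Nodup := by
    rw [← Walk.tail_support_append, hspec]; exact hrc.support_nodup
  have hxq : x ∈ q.support.tail := Walk.end_mem_tail_support_of_ne hxy.symm q
  have hyp : y ∈ p.support.tail := Walk.end_mem_tail_support_of_ne hxy p
  have hxnp : x ∉ p.support.tail := fun hxp =>
    (List.disjoint_of_nodup_append htail) hxp hxq
  have hynq : y ∉ q.support.tail := fun hyq =>
    (List.disjoint_of_nodup_append htail) hyp hyq
  have hppath : p.IsPath := by
    rw [Walk.isPath_def, p.support_eq_cons]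
    exact List.nodup_cons.mpr ⟨hxnp, htail.of_append_left⟩
  have hqpath : q.IsPath := by
    rw [Walk.isPath_def, q.support_eq_cons]
    exact List.nodup_cons.mpr ⟨hynq, htail.of_append_right⟩
  have hpe : ∀ e, e ∈ p.edges → e ∈ c.edges := fun e he =>
    (hedge_iff e).mp (rc.edges_takeUntil_subset hyr he)
  have hqe : ∀ e, e ∈ q.edges → e ∈ c.edges := fun e he =>
    (hedge_iff e).mp (rc.edges_dropUntil_subset hyr he)
  have hplen : 2 ≤ p.length := by
    have h1 : 1 ≤ p.length := one_le_length_of_end_mem_tail p hyp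
    rcases Nat.lt_or_ge p.length 2 with h2 | h2
    · exfalso
      have : p.length = 1 := by omega
      exact hne (hpe _ (mem_edges_of_length_one p this))
    · exact h2
  have hqlen : 2 ≤ q.length := by
    have h1 : 1 ≤ q.length := one_le_length_of_end_mem_tail q hxq
    rcases Nat.lt_or_ge q.length 2 with h2 | h2
    · exfalso
      have h3 : q.length = 1 := by omega
      have := hqe _ (mem_edges_of_length_one q h3)
      rw [Sym2.eq_swap] at this
      exact hne this
    · exact h2
  refine ⟨Walk.cons hadj.symm p, Walk.cons hadj q, ?_, ?_, ?_, ?_, ?_, ?_⟩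
  · refine (Walk.cons_isCycle_iff p hadj.symm).mpr ⟨hppath, fun h => ?_⟩
    rw [Sym2.eq_swap] at h
    exact hne (hpe _ h)
  · exact (Walk.cons_isCycle_iff q hadj).mpr ⟨hqpath, fun h => hne (hqe _ h)⟩
  · simp only [Walk.length_cons]; omega
  · simp only [Walk.length_cons]; omega
  · simp only [Walk.length_cons]; omega
  · funext e
    have hce : ((e : Sym2 V) ∈ c.edges) ↔
        ((e : Sym2 V) ∈ p.edges ∨ (e : Sym2 V) ∈ q.edges) := by
      rw [← hedge_iff, ← hspec, Walk.edges_append, List.mem_append]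
    simp only [cycleVector, Pi.add_apply, Walk.edges_cons, List.mem_cons]
    by_cases hexy : (e : Sym2 V) = s(x, y)
    · have h1 : (e : Sym2 V) = s(y, x) := hexy.trans (Sym2.eq_swap)
      have h2 : (e : Sym2 V) ∉ c.edges := hexy ▸ hne
      rw [if_neg h2, if_pos (Or.inl h1), if_pos (Or.inl hexy)]
      decide
    · have h1 : ¬((e : Sym2 V) = s(y, x)) := fun h =>
        hexy (h.trans (Sym2.eq_swap))
      by_cases hp1 : (e : Sym2 V) ∈ p.edges
      · have hq1 : (e : Sym2 V) ∉ q.edges := fun h => heddisj _ hp1 h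
        simp [hce, hp1, hq1, h1, hexy]
      · by_cases hq1 : (e : Sym2 V) ∈ q.edges <;> simp [hce, hp1, hq1, h1, hexy]

lemma sym2_exists_eq (z : Sym2 V) : ∃ a b, z = s(a, b) := by
  induction z using Sym2.ind with | _ a b => exact ⟨a, b, rfl⟩

/-- Every nonzero element of the cycle space supports a cycle. -/
lemma exists_cycle_in_support {w : G.edgeSet → ZMod 2} (hw : w ∈ cycleSpace G)
    (hnz : w ≠ 0) :
    ∃ (v : V) (c : G.Walk v v), c.IsCycle ∧
      ∀ e : G.edgeSet, (e : Sym2 V) ∈ c.edges → w e ≠ 0 := by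
  classical
  let H : SimpleGraph V :=
    { Adj := fun a b => ∃ h : G.Adj a b, w ⟨s(a, b), h⟩ ≠ 0
      symm := by
        constructor
        rintro a b ⟨h, hne⟩
        refine ⟨h.symm, ?_⟩
        have heq : (⟨s(b, a), h.symm⟩ : G.edgeSet) = ⟨s(a, b), h⟩ :=
          Subtype.ext (Sym2.eq_swap)
        rw [heq]; exact hne
      loopless := by constructor; rintro a ⟨h, -⟩; exact G.irrefl h }
  have hker : ∀ a : V, (∑ e : G.edgeSet, if a ∈ (e : Sym2 V) then w e else 0) = 0 := by
    intro a
    have h := hw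
    rw [cycleSpace, LinearMap.mem_ker] at h
    exact congrFun h a
  have h2 : ∀ a b : V, H.Adj a b → ∃ z : V, H.Adj a z ∧ z ≠ b := by
    rintro a b ⟨hab, hwab⟩
    set T : Finset G.edgeSet :=
      Finset.univ.filter (fun e => a ∈ (e : Sym2 V) ∧ w e ≠ 0) with hT
    have hsum : (∑ e : G.edgeSet, if a ∈ (e : Sym2 V) then w e else 0)
        = (T.card : ZMod 2) := by
      rw [hT, ← Finset.sum_boole]
      refine Finset.sum_congr rfl fun e _ => ?_
      by_cases h1 : a ∈ (e : Sym2 V)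
      · by_cases hz : w e = 0
        · simp [h1, hz]
        · simp [h1, hz, zmod2_eq_one hz]
      · simp [h1]
    have hTeven : Even T.card := by
      have h := hker a
      rw [hsum] at h
      exact even_iff_two_dvd.mpr ((ZMod.natCast_eq_zero_iff _ _).mp h)
    have hmemb : (⟨s(a, b), hab⟩ : G.edgeSet) ∈ T := by
      simp only [hT, Finset.mem_filter, Finset.mem_univ, true_and]
      exact ⟨by simp, hwab⟩
    obtain ⟨e', he'T, he'ne⟩ : ∃ e' ∈ T, e' ≠ (⟨s(a, b), hab⟩ : G.edgeSet) := by
      by_contra hcon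
      push_neg at hcon
      have hsub : T ⊆ {(⟨s(a, b), hab⟩ : G.edgeSet)} := fun t ht =>
        Finset.mem_singleton.mpr (hcon t ht)
      have h1 : T.card = 1 := le_antisymm (by simpa using Finset.card_le_card hsub)
        (Finset.card_pos.mpr ⟨_, hmemb⟩)
      rw [h1] at hTeven
      exact (by decide : ¬ Even 1) hTeven
    have he'T' := Finset.mem_filter.mp he'T
    obtain ⟨ha', hw'⟩ := he'T'.2
    obtain ⟨z, hz⟩ := Sym2.mem_iff_exists.mp ha'
    have hGaz : G.Adj a z := by
      rw [← SimpleGraph.mem_edgeSet, ← hz]; exact e'.2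
    refine ⟨z, ⟨hGaz, ?_⟩, ?_⟩
    · have heq : (⟨s(a, z), hGaz⟩ : G.edgeSet) = e' := Subtype.ext hz.symm
      rw [heq]; exact hw'
    · rintro rfl
      exact he'ne (Subtype.ext hz)
  have grow : ∀ (n : ℕ) (x y : V) (p : H.Walk x y), p.IsPath → ¬ p.Nil →
      Fintype.card V ≤ n + p.length → ∃ (u : V) (cc : H.Walk u u), cc.IsCycle := by
    intro n
    induction n with
    | zero =>
      intro x y p hp _ hcard
      exact absurd hp.length_lt (by omega)
    | succ n ih =>
      intro x y p hp hnil hcard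
      obtain ⟨w0, q, h', heq⟩ : ∃ (w0 : V) (q : H.Walk x w0) (h' : H.Adj w0 y),
          p = q.concat h' := by
        cases p with
        | nil => simp at hnil
        | cons h p0 => exact Walk.exists_cons_eq_concat h p0
      obtain ⟨z, hyz, hzw0⟩ := h2 y w0 h'.symm
      by_cases hzs : z ∈ p.support
      · refine ⟨y, Walk.cons hyz (p.dropUntil z hzs), ?_⟩
        refine (Walk.cons_isCycle_iff _ hyz).mpr ⟨hp.dropUntil hzs, fun hmem => ?_⟩
        have hsub := p.edges_dropUntil_subset hzs hmem
        rw [heq, Walk.edges_concat, List.concat_eq_append, List.mem_append] at hsub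
        rcases hsub with hq | hs
        · have hy1 : y ∈ q.support := Walk.fst_mem_support_of_mem_edges q hq
          have hnd : p.support.Nodup := hp.support_nodup
          rw [heq, Walk.support_concat] at hnd
          exact (List.disjoint_of_nodup_append hnd) hy1 (by simp)
        · simp only [List.mem_singleton] at hs
          rw [Sym2.eq_iff] at hs
          rcases hs with ⟨-, rfl⟩ | ⟨-, rfl⟩
          · exact hyz.ne rfl
          · exact hzw0 rfl
      · have hpath2 : (p.concat hyz).IsPath := by
          rw [← Walk.isPath_reverse_iff, Walk.reverse_concat]
          refine ((p.isPath_reverse_iff).mpr hp).cons ?_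
          rw [Walk.support_reverse, List.mem_reverse]
          exact hzs
        refine ih x z (p.concat hyz) hpath2 ?_ ?_
        · intro hN
          rw [Walk.nil_iff_length_eq, Walk.length_concat] at hN
          omega
        · rw [Walk.length_concat]
          omega
  have hne0 : ∃ e0 : G.edgeSet, w e0 ≠ 0 := by
    by_contra hcon
    push_neg at hcon
    exact hnz (funext fun e => hcon e)
  obtain ⟨e0, hw0⟩ := hne0
  obtain ⟨a0, b0, hab0⟩ := sym2_exists_eq (e0 : Sym2 V)
  have hG0 : G.Adj a0 b0 := by
    rw [← SimpleGraph.mem_edgeSet, ← hab0]; exact e0.2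
  have hH0 : H.Adj a0 b0 := by
    refine ⟨hG0, ?_⟩
    have heq : (⟨s(a0, b0), hG0⟩ : G.edgeSet) = e0 := Subtype.ext hab0.symm
    rw [heq]; exact hw0
  have hstart : (Walk.cons hH0 (Walk.nil : H.Walk b0 b0)).IsPath := by
    refine (Walk.cons_isPath_iff _ _).mpr ⟨Walk.IsPath.nil, ?_⟩
    simp [hH0.ne]
  obtain ⟨u, cc, hcc⟩ := grow (Fintype.card V) a0 b0 (Walk.cons hH0 Walk.nil)
    hstart (by simp) (by simp)
  have hsub : ∀ e ∈ cc.edges, e ∈ G.edgeSet := by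
    intro e he
    have heH : e ∈ H.edgeSet := cc.edges_subset_edgeSet he
    obtain ⟨a, b, rfl⟩ := sym2_exists_eq e
    rw [SimpleGraph.mem_edgeSet] at heH ⊢
    obtain ⟨hGab, -⟩ := heH
    exact hGab
  refine ⟨u, cc.transfer G hsub, hcc.transfer hsub, ?_⟩
  intro e he
  rw [Walk.edges_transfer] at he
  have heH : (e : Sym2 V) ∈ H.edgeSet := cc.edges_subset_edgeSet he
  obtain ⟨a, b, hab⟩ := sym2_exists_eq (e : Sym2 V)
  rw [hab, SimpleGraph.mem_edgeSet] at heH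
  obtain ⟨hGab, hwne⟩ := heH
  have heq : (⟨s(a, b), hGab⟩ : G.edgeSet) = e := Subtype.ext hab.symm
  rwa [heq] at hwne

lemma card_filter_mem_edges {u₀ : V} {c : G.Walk u₀ u₀} (hc : c.IsTrail) :
    (Finset.univ.filter fun e : G.edgeSet => (e : Sym2 V) ∈ c.edges).card
      = c.length := by
  classical
  rw [← c.length_edges, ← List.toFinset_card_of_nodup hc.edges_nodup]
  refine Finset.card_bij (fun (e : G.edgeSet) (_ : e ∈ Finset.univ.filter
    fun e : G.edgeSet => (e : Sym2 V) ∈ c.edges) => (e : Sym2 V)) ?_ ?_ ?_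
  · intro a ha
    simp only [Finset.mem_filter] at ha
    simpa using ha.2
  · intro a _ b _ hab
    exact Subtype.ext hab
  · intro b hb
    simp only [List.mem_toFinset] at hb
    exact ⟨⟨b, Walk.edges_subset_edgeSet c hb⟩, by simp [hb], rfl⟩

/-- Peeling decomposition of an element of the cycle space into cycles supported
inside its support, with total length at most the size of the support. -/
lemma peel_aux : ∀ (n : ℕ) (w : G.edgeSet → ZMod 2), w ∈ cycleSpace G →
    (Finset.univ.filter fun e => w e ≠ 0).card ≤ n →
    ∃ L : List (Σ u : V, G.Walk u u),
      (∀ x ∈ L, x.snd.IsCycle) ∧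
      w = (L.map fun x => cycleVector G x.snd).sum ∧
      (L.map fun x => x.snd.length).sum ≤ (Finset.univ.filter fun e => w e ≠ 0).card := by
  classical
  intro n
  induction n with
  | zero =>
    intro w hw hcard
    have hw0 : w = 0 := by
      funext e
      show w e = 0
      by_contra hne
      have hmem : e ∈ Finset.univ.filter fun e => w e ≠ 0 := by simp [hne]
      have := Finset.card_pos.mpr ⟨e, hmem⟩
      omega
    exact ⟨[], by simp, by simp [hw0], by simp⟩
  | succ n ih =>
    intro w hw hcard
    by_cases hw0 : w = 0
    · exact ⟨[], by simp, by simp [hw0], by simp⟩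
    obtain ⟨v, c, hc, hce⟩ := exists_cycle_in_support hw hw0
    set w' := w + cycleVector G c with hw'def
    have hwsum : w = w' + cycleVector G c := by
      funext e
      simp only [hw'def, Pi.add_apply]
      rw [add_assoc, zmod2_add_self, add_zero]
    have hw' : w' ∈ cycleSpace G :=
      (cycleSpace G).add_mem hw (cycleVector_mem_cycleSpace hc.isCircuit.isTrail)
    set S := Finset.univ.filter (fun e : G.edgeSet => (e : Sym2 V) ∈ c.edges) with hS
    have hScard : S.card = c.length := card_filter_mem_edges hc.isCircuit.isTrail
    have hsub : S ⊆ Finset.univ.filter (fun e => w e ≠ 0) := by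
      intro e he
      simp only [hS, Finset.mem_filter, Finset.mem_univ, true_and] at he ⊢
      exact hce e he
    have hw'supp : (Finset.univ.filter fun e => w' e ≠ 0)
        = (Finset.univ.filter fun e => w e ≠ 0) \ S := by
      ext e
      simp only [Finset.mem_filter, Finset.mem_sdiff, hS, hw'def, Pi.add_apply,
        Finset.mem_univ, true_and]
      by_cases hmem : (e : Sym2 V) ∈ c.edges
      · have h1 : cycleVector G c e = 1 := by simp [cycleVector, hmem]
        have h2 : w e = 1 := zmod2_eq_one (hce e hmem)
        rw [h1, h2]
        constructor
        · intro hcon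
          exact absurd (by decide : (1 : ZMod 2) + 1 = 0) hcon
        · rintro ⟨-, hcon⟩
          exact absurd hmem hcon
      · have h1 : cycleVector G c e = 0 := by simp [cycleVector, hmem]
        rw [h1, add_zero]
        simp [hmem]
    have hcards : (Finset.univ.filter fun e => w' e ≠ 0).card + c.length
        = (Finset.univ.filter fun e => w e ≠ 0).card := by
      rw [hw'supp, ← hScard]
      exact Finset.card_sdiff_add_card_eq_card hsub
    have h3 := hc.three_le_length
    obtain ⟨L, hL1, hL2, hL3⟩ := ih w' hw' (by omega)
    refine ⟨⟨v, c⟩ :: L, ?_, ?_, ?_⟩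
    · rintro x hx
      rcases List.mem_cons.mp hx with rfl | hx
      · exact hc
      · exact hL1 x hx
    · rw [List.map_cons, List.sum_cons, ← hL2, hwsum, add_comm]
    · rw [List.map_cons, List.sum_cons]
      show c.length + (L.map fun x => x.snd.length).sum ≤ _
      omega

/-- The cycle vector of any cycle lies in the span of the primitive cycle vectors. -/
lemma cycleVector_mem_span : ∀ (n : ℕ) {v : V} (c : G.Walk v v), c.IsCycle →
    c.length ≤ n →
    cycleVector G c ∈ Submodule.span (ZMod 2) (primCycleVectors G) := by
  intro n
  induction n with
  | zero =>
    intro v c hc hlen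
    exact absurd hc.three_le_length (by omega)
  | succ n ih =>
    intro v c hc hlen
    by_cases hprim : IsPrimitiveCycle G c
    · exact Submodule.subset_span ⟨v, c, hprim, rfl⟩
    · have hB : ¬ ∀ x y, x ∈ c.support → y ∈ c.support → G.Adj x y →
          s(x, y) ∈ c.edges := fun hB => hprim ⟨hc, hB⟩
      push_neg at hB
      obtain ⟨x, y, hxs, hys, hadj, hne⟩ := hB
      obtain ⟨c', c'', hc', hc'', hsum, hlt', hlt'', hvec⟩ :=
        chord_split hc hxs hys hadj hne
      rw [hvec]
      exact Submodule.add_mem _ (ih c' hc' (by omega)) (ih c'' hc'' (by omega))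

lemma mem_span_primCycleVectors {w : G.edgeSet → ZMod 2} (hw : w ∈ cycleSpace G) :
    w ∈ Submodule.span (ZMod 2) (primCycleVectors G) := by
  classical
  obtain ⟨L, hL1, hL2, -⟩ :=
    peel_aux (Finset.univ.filter fun e => w e ≠ 0).card w hw le_rfl
  rw [hL2]
  clear hL2
  induction L with
  | nil => simp
  | cons hd tl ihl =>
    rw [List.map_cons, List.sum_cons]
    exact Submodule.add_mem _
      (cycleVector_mem_span hd.snd.length hd.snd (hL1 hd (by simp)) le_rfl)
      (ihl fun x hx => hL1 x (by simp [hx]))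

lemma span_primCycleVectors_eq :
    Submodule.span (ZMod 2) (primCycleVectors G) = cycleSpace G := by
  apply le_antisymm
  · rw [Submodule.span_le]
    rintro w ⟨u, c, hprim, rfl⟩
    exact cycleVector_mem_cycleSpace hprim.1.isCircuit.isTrail
  · intro w hw
    exact mem_span_primCycleVectors hw

lemma cycleVector_inj {u1 u2 : V} {c1 : G.Walk u1 u1} {c2 : G.Walk u2 u2}
    (h : cycleVector G c1 = cycleVector G c2) :
    {e | e ∈ c1.edges} = {e | e ∈ c2.edges} := by
  have key : ∀ (w1 w2 : V) (d1 : G.Walk w1 w1) (d2 : G.Walk w2 w2),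
      cycleVector G d1 = cycleVector G d2 → ∀ e, e ∈ d1.edges → e ∈ d2.edges := by
    intro w1 w2 d1 d2 heq e he
    have heE : e ∈ G.edgeSet := Walk.edges_subset_edgeSet d1 he
    have hco := congrFun heq ⟨e, heE⟩
    simp only [cycleVector] at hco
    rw [if_pos he] at hco
    by_contra h2e
    rw [if_neg h2e] at hco
    exact one_ne_zero hco
  ext e
  simp only [Set.mem_setOf_eq]
  exact ⟨fun he => key _ _ c1 c2 h e he, fun he => key _ _ c2 c1 h.symm e he⟩

lemma card_filter_cycleVector {u : V} {c : G.Walk u u} (hc : c.IsTrail) :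
    (Finset.univ.filter fun e => cycleVector G c e ≠ 0).card = c.length := by
  classical
  have hfil : (Finset.univ.filter fun e => cycleVector G c e ≠ 0)
      = (Finset.univ.filter fun e : G.edgeSet => (e : Sym2 V) ∈ c.edges) := by
    apply Finset.filter_congr
    intro e _
    by_cases hmem : (e : Sym2 V) ∈ c.edges <;> simp [cycleVector, hmem]
  rw [hfil, card_filter_mem_edges hc]

lemma frank_eq_ncard : frank G = (primCycleVectors G).ncard := by
  classical
  rw [frank]
  have himg : primCycleVectors G = (fun s : Set (Sym2 V) =>
      (fun e : G.edgeSet => if (e : Sym2 V) ∈ s then (1 : ZMod 2) else 0)) ''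
        primCycleEdgeSets G := by
    ext w
    constructor
    · rintro ⟨u, c, hprim, rfl⟩
      refine ⟨{e | e ∈ c.edges}, ⟨u, c, hprim, rfl⟩, ?_⟩
      funext e
      simp [cycleVector]
    · rintro ⟨s, ⟨u, c, hprim, rfl⟩, rfl⟩
      refine ⟨u, c, hprim, ?_⟩
      funext e
      simp [cycleVector]
  rw [himg, Set.ncard_image_of_injOn]
  rintro s1 ⟨u1, c1, h1, rfl⟩ s2 ⟨u2, c2, h2, rfl⟩ heq
  have hv : cycleVector G c1 = cycleVector G c2 := by
    funext e
    have hco := congrFun heq e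
    simp only [Set.mem_setOf_eq] at hco
    by_cases h1m : (e : Sym2 V) ∈ c1.edges <;>
      by_cases h2m : (e : Sym2 V) ∈ c2.edges <;>
      simp [cycleVector, h1m, h2m] at hco ⊢
  exact cycleVector_inj hv

end Aux

/-- If `rank(G) = frank(G)`, then `G` has the primitive cycle property. -/
theorem pcp_of_rank_eq_frank [Fintype V] (G : SimpleGraph V)
    (h : cycRank G = frank G) : PCP G := by
  classical
  intro u1 u2 c1 c2 h1 h2 hne
  by_contra hgt
  push_neg at hgt
  -- `P` : the set of primitive cycle vectors, a spanning set of the cycle space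
  set P := primCycleVectors G with hPdef
  haveI : Fintype P := Set.Finite.fintype (Set.toFinite _)
  have hcardP : Fintype.card P = frank G := by
    rw [frank_eq_ncard, Set.ncard_eq_toFinset_card', Set.toFinset_card]
  -- linear independence of the primitive cycle vectors
  have li : LinearIndependent (ZMod 2) ((↑) : P → (G.edgeSet → ZMod 2)) := by
    rw [linearIndependent_iff_card_eq_finrank_span, Subtype.range_coe]
    show Fintype.card P
      = Module.finrank (ZMod 2) (Submodule.span (ZMod 2) (primCycleVectors G))
    rw [span_primCycleVectors_eq, hcardP]
    show frank G = cycRank G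
    exact h.symm
  -- a basis of the cycle space consisting of the primitive cycle vectors
  have hspan : Submodule.span (ZMod 2)
      (Set.range ((↑) : P → (G.edgeSet → ZMod 2))) = cycleSpace G := by
    rw [Subtype.range_coe]
    exact span_primCycleVectors_eq
  let b0 : Module.Basis P (ZMod 2) (Submodule.span (ZMod 2)
      (Set.range ((↑) : P → (G.edgeSet → ZMod 2)))) := Module.Basis.span li
  let eqv := LinearEquiv.ofEq _ _ hspan
  let b : Module.Basis P (ZMod 2) (cycleSpace G) := b0.map eqv
  have hbval : ∀ p : P, ((b p : cycleSpace G) : G.edgeSet → ZMod 2)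
      = (p : G.edgeSet → ZMod 2) := by
    intro p
    show (((b0.map eqv) p : cycleSpace G) : G.edgeSet → ZMod 2) = _
    rw [Module.Basis.map_apply]
    show ((eqv (b0 p) : cycleSpace G) : G.edgeSet → ZMod 2) = _
    rw [LinearEquiv.coe_ofEq_apply]
    exact congrArg Subtype.val (Module.Basis.span_apply li p)
  -- representation of primitive cycle vectors in the basis
  have hΦprim : ∀ (u : V) (c : G.Walk u u) (hp : IsPrimitiveCycle G c)
      (m : cycleSpace G), (m : G.edgeSet → ZMod 2) = cycleVector G c →
      ∀ j : P, b.repr m j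
        = if (⟨cycleVector G c, ⟨u, c, hp, rfl⟩⟩ : P) = j then 1 else 0 := by
    intro u c hp m hm j
    have hmb : m = b ⟨cycleVector G c, ⟨u, c, hp, rfl⟩⟩ :=
      Subtype.ext (hm.trans (hbval ⟨cycleVector G c, ⟨u, c, hp, rfl⟩⟩).symm)
    rw [hmb, b.repr_self, Finsupp.single_apply]
  -- indices of the two given primitive cycles
  let idx1 : P := ⟨cycleVector G c1, ⟨u1, c1, h1, rfl⟩⟩
  let idx2 : P := ⟨cycleVector G c2, ⟨u2, c2, h2, rfl⟩⟩
  have hvne : cycleVector G c1 ≠ cycleVector G c2 := fun hcon =>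
    hne (cycleVector_inj hcon)
  have hidxne : idx1 ≠ idx2 := fun hcon => hvne (congrArg Subtype.val hcon)
  have m1mem : cycleVector G c1 ∈ cycleSpace G :=
    cycleVector_mem_cycleSpace h1.1.isCircuit.isTrail
  have m2mem : cycleVector G c2 ∈ cycleSpace G :=
    cycleVector_mem_cycleSpace h2.1.isCircuit.isTrail
  have hlenP1 : (Finset.univ.filter fun e =>
      (idx1 : G.edgeSet → ZMod 2) e ≠ 0).card = c1.length :=
    card_filter_cycleVector h1.1.isCircuit.isTrail
  have hlenP2 : (Finset.univ.filter fun e =>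
      (idx2 : G.edgeSet → ZMod 2) e ≠ 0).card = c2.length :=
    card_filter_cycleVector h2.1.isCircuit.isTrail
  -- Claim 1 : if the coordinate of `j` in a cycle vector is nonzero, the length
  -- of the cycle is at least the size of the support of `j`.
  have claim1 : ∀ (n : ℕ) (u : V) (d : G.Walk u u), d.IsCycle → d.length ≤ n →
      ∀ (m : cycleSpace G), (m : G.edgeSet → ZMod 2) = cycleVector G d →
      ∀ j : P, b.repr m j ≠ 0 →
      (Finset.univ.filter fun e => (j : G.edgeSet → ZMod 2) e ≠ 0).card ≤ d.length := by
    intro n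
    induction n with
    | zero =>
      intro u d hd hlen
      exact absurd hd.three_le_length (by omega)
    | succ n ih =>
      intro u d hd hlen m hm j hj
      by_cases hprim : IsPrimitiveCycle G d
      · rw [hΦprim u d hprim m hm j] at hj
        by_cases hjd : (⟨cycleVector G d, ⟨u, d, hprim, rfl⟩⟩ : P) = j
        · rw [← hjd]
          rw [show ((((⟨cycleVector G d, ⟨u, d, hprim, rfl⟩⟩ : P)) :
            G.edgeSet → ZMod 2)) = cycleVector G d from rfl]
          rw [card_filter_cycleVector hd.isCircuit.isTrail]
        · rw [if_neg hjd] at hj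
          exact absurd rfl hj
      · have hB : ¬ ∀ x y, x ∈ d.support → y ∈ d.support → G.Adj x y →
            s(x, y) ∈ d.edges := fun hB => hprim ⟨hd, hB⟩
        push_neg at hB
        obtain ⟨x, y, hxs, hys, hadj, hnc⟩ := hB
        obtain ⟨d', d'', hd', hd'', hsum, hlt', hlt'', hvec⟩ :=
          chord_split hd hxs hys hadj hnc
        have hm' : cycleVector G d' ∈ cycleSpace G :=
          cycleVector_mem_cycleSpace hd'.isCircuit.isTrail
        have hm'' : cycleVector G d'' ∈ cycleSpace G :=
          cycleVector_mem_cycleSpace hd''.isCircuit.isTrail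
        have hmm : m = ⟨cycleVector G d', hm'⟩ + ⟨cycleVector G d'', hm''⟩ :=
          Subtype.ext (by rw [hm, hvec]; rfl)
        rw [hmm, map_add, Finsupp.add_apply] at hj
        have hor : b.repr ⟨cycleVector G d', hm'⟩ j ≠ 0 ∨
            b.repr ⟨cycleVector G d'', hm''⟩ j ≠ 0 := by
          by_contra hcon
          push_neg at hcon
          rw [hcon.1, hcon.2, add_zero] at hj
          exact hj rfl
        rcases hor with h' | h'
        · have := ih _ d' hd' (by omega) ⟨cycleVector G d', hm'⟩ rfl j h'
          omega
        · have := ih _ d'' hd'' (by omega) ⟨cycleVector G d'', hm''⟩ rfl j h'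
          omega
  -- Claim 2 : a cycle whose vector has nonzero coordinates at both `idx1` and
  -- `idx2` has length at least `c1.length + c2.length - 2`.
  have claim2 : ∀ (n : ℕ) (u : V) (d : G.Walk u u), d.IsCycle → d.length ≤ n →
      ∀ (m : cycleSpace G), (m : G.edgeSet → ZMod 2) = cycleVector G d →
      b.repr m idx1 ≠ 0 → b.repr m idx2 ≠ 0 →
      c1.length + c2.length ≤ d.length + 2 := by
    intro n
    induction n with
    | zero =>
      intro u d hd hlen
      exact absurd hd.three_le_length (by omega)
    | succ n ih =>
      intro u d hd hlen m hm hj1 hj2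
      by_cases hprim : IsPrimitiveCycle G d
      · rw [hΦprim u d hprim m hm idx1] at hj1
        rw [hΦprim u d hprim m hm idx2] at hj2
        by_cases e1 : (⟨cycleVector G d, ⟨u, d, hprim, rfl⟩⟩ : P) = idx1
        · by_cases e2 : (⟨cycleVector G d, ⟨u, d, hprim, rfl⟩⟩ : P) = idx2
          · exact absurd (e1.symm.trans e2) hidxne
          · rw [if_neg e2] at hj2
            exact absurd rfl hj2
        · rw [if_neg e1] at hj1
          exact absurd rfl hj1
      · have hB : ¬ ∀ x y, x ∈ d.support → y ∈ d.support → G.Adj x y →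
            s(x, y) ∈ d.edges := fun hB => hprim ⟨hd, hB⟩
        push_neg at hB
        obtain ⟨x, y, hxs, hys, hadj, hnc⟩ := hB
        obtain ⟨d', d'', hd', hd'', hsum, hlt', hlt'', hvec⟩ :=
          chord_split hd hxs hys hadj hnc
        have hm' : cycleVector G d' ∈ cycleSpace G :=
          cycleVector_mem_cycleSpace hd'.isCircuit.isTrail
        have hm'' : cycleVector G d'' ∈ cycleSpace G :=
          cycleVector_mem_cycleSpace hd''.isCircuit.isTrail
        have hmm : m = ⟨cycleVector G d', hm'⟩ + ⟨cycleVector G d'', hm''⟩ :=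
          Subtype.ext (by rw [hm, hvec]; rfl)
        rw [hmm, map_add, Finsupp.add_apply] at hj1 hj2
        have horA : b.repr ⟨cycleVector G d', hm'⟩ idx1 ≠ 0 ∨
            b.repr ⟨cycleVector G d'', hm''⟩ idx1 ≠ 0 := by
          by_contra hcon
          push_neg at hcon
          rw [hcon.1, hcon.2, add_zero] at hj1
          exact hj1 rfl
        have horB : b.repr ⟨cycleVector G d', hm'⟩ idx2 ≠ 0 ∨
            b.repr ⟨cycleVector G d'', hm''⟩ idx2 ≠ 0 := by
          by_contra hcon
          push_neg at hcon
          rw [hcon.1, hcon.2, add_zero] at hj2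
          exact hj2 rfl
        by_cases hboth' : b.repr ⟨cycleVector G d', hm'⟩ idx1 ≠ 0 ∧
            b.repr ⟨cycleVector G d', hm'⟩ idx2 ≠ 0
        · have := ih _ d' hd' (by omega) ⟨cycleVector G d', hm'⟩ rfl
            hboth'.1 hboth'.2
          omega
        by_cases hboth'' : b.repr ⟨cycleVector G d'', hm''⟩ idx1 ≠ 0 ∧
            b.repr ⟨cycleVector G d'', hm''⟩ idx2 ≠ 0
        · have := ih _ d'' hd'' (by omega) ⟨cycleVector G d'', hm''⟩ rfl
            hboth''.1 hboth''.2
          omega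
        rcases horA with hA' | hA''
        · have hB'' : b.repr ⟨cycleVector G d'', hm''⟩ idx2 ≠ 0 := by
            rcases horB with hB' | hB''
            · exact absurd ⟨hA', hB'⟩ hboth'
            · exact hB''
          have k1 := claim1 d'.length _ d' hd' le_rfl ⟨cycleVector G d', hm'⟩
            rfl idx1 hA'
          have k2 := claim1 d''.length _ d'' hd'' le_rfl ⟨cycleVector G d'', hm''⟩
            rfl idx2 hB''
          rw [hlenP1] at k1
          rw [hlenP2] at k2
          omega
        · have hB' : b.repr ⟨cycleVector G d', hm'⟩ idx2 ≠ 0 := by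
            rcases horB with hB' | hB''
            · exact hB'
            · exact absurd ⟨hA'', hB''⟩ hboth''
          have k1 := claim1 d''.length _ d'' hd'' le_rfl ⟨cycleVector G d'', hm''⟩
            rfl idx1 hA''
          have k2 := claim1 d'.length _ d' hd' le_rfl ⟨cycleVector G d', hm'⟩
            rfl idx2 hB'
          rw [hlenP1] at k1
          rw [hlenP2] at k2
          omega
  -- sum of cycle vectors of a list of cycles lies in the cycle space
  have sum_mem : ∀ (L : List (Σ u : V, G.Walk u u)), (∀ x ∈ L, x.snd.IsCycle) →
      (L.map fun x => cycleVector G x.snd).sum ∈ cycleSpace G := by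
    intro L
    induction L with
    | nil =>
      intro _
      simp only [List.map_nil, List.sum_nil]
      exact (cycleSpace G).zero_mem
    | cons hd tl ihl =>
      intro hL
      rw [List.map_cons, List.sum_cons]
      exact (cycleSpace G).add_mem
        (cycleVector_mem_cycleSpace (hL hd (by simp)).isCircuit.isTrail)
        (ihl fun x hx => hL x (by simp [hx]))
  -- coordinates of a sum of cycle vectors
  have repr_sum : ∀ (L : List (Σ u : V, G.Walk u u)) (hL : ∀ x ∈ L, x.snd.IsCycle)
      (m : cycleSpace G),
      ((m : G.edgeSet → ZMod 2) = (L.map fun x => cycleVector G x.snd).sum) →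
      ∀ j : P, b.repr m j =
        (L.map fun x => if hx : x.snd.IsCycle then
          b.repr ⟨cycleVector G x.snd,
            cycleVector_mem_cycleSpace hx.isCircuit.isTrail⟩ j else 0).sum := by
    intro L
    induction L with
    | nil =>
      intro hL m hm j
      have hm0 : m = 0 := Subtype.ext (by simpa using hm)
      rw [hm0]
      simp
    | cons hd tl ihl =>
      intro hL m hm j
      have hhd := hL hd (by simp)
      have htl : (tl.map fun x => cycleVector G x.snd).sum ∈ cycleSpace G :=
        sum_mem tl (fun x hx => hL x (by simp [hx]))
      have hm2 : m = ⟨cycleVector G hd.snd,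
          cycleVector_mem_cycleSpace hhd.isCircuit.isTrail⟩ + ⟨_, htl⟩ :=
        Subtype.ext (by rw [hm, List.map_cons, List.sum_cons]; rfl)
      rw [hm2, map_add, Finsupp.add_apply, List.map_cons, List.sum_cons,
        dif_pos hhd, ihl (fun x hx => hL x (by simp [hx])) ⟨_, htl⟩ rfl j]
  have exists_ne : ∀ (L : List (Σ u : V, G.Walk u u))
      (f : (Σ u : V, G.Walk u u) → ZMod 2), (L.map f).sum ≠ 0 →
      ∃ x ∈ L, f x ≠ 0 := by
    intro L f hsum
    by_contra hcon
    push_neg at hcon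
    refine hsum (List.sum_eq_zero ?_)
    intro y hy
    obtain ⟨x, hx, rfl⟩ := List.mem_map.mp hy
    exact hcon x hx
  have two_mem_sum : ∀ (L : List (Σ u : V, G.Walk u u)) (x1 x2 : Σ u : V, G.Walk u u),
      x1 ∈ L → x2 ∈ L → x1 ≠ x2 →
      x1.snd.length + x2.snd.length ≤ (L.map fun x => x.snd.length).sum := by
    intro L x1 x2 hx1 hx2 hne12
    have hperm := List.perm_cons_erase hx1
    have hx2' : x2 ∈ L.erase x1 := (List.mem_erase_of_ne hne12.symm).mpr hx2
    have h1 : (L.map fun x => x.snd.length).sum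
        = x1.snd.length + ((L.erase x1).map fun x => x.snd.length).sum := by
      rw [(hperm.map _).sum_eq]
      simp
    have h2 : x2.snd.length ≤ ((L.erase x1).map fun x => x.snd.length).sum :=
      List.single_le_sum (fun x _ => Nat.zero_le x) _
        (List.mem_map.mpr ⟨x2, hx2', rfl⟩)
    omega
  -- the symmetric difference vector
  have hzmem : cycleVector G c1 + cycleVector G c2 ∈ cycleSpace G :=
    (cycleSpace G).add_mem m1mem m2mem
  -- support cardinalities
  have hcard1 : (Finset.univ.filter
      fun e : G.edgeSet => (e : Sym2 V) ∈ c1.edges).card = c1.length :=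
    card_filter_mem_edges h1.1.isCircuit.isTrail
  have hcard2 : (Finset.univ.filter
      fun e : G.edgeSet => (e : Sym2 V) ∈ c2.edges).card = c2.length :=
    card_filter_mem_edges h2.1.isCircuit.isTrail
  set A := Finset.univ.filter (fun e : G.edgeSet => (e : Sym2 V) ∈ c1.edges) with hA
  set B := Finset.univ.filter (fun e : G.edgeSet => (e : Sym2 V) ∈ c2.edges) with hB
  have hzfilter : (Finset.univ.filter
      fun e => (cycleVector G c1 + cycleVector G c2) e ≠ 0) = (A ∪ B) \ (A ∩ B) := by
    refine Finset.ext fun e => ?_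
    rw [Finset.mem_filter]
    simp only [Finset.mem_filter, Finset.mem_univ, true_and, Finset.mem_sdiff,
      Finset.mem_union, Finset.mem_inter, hA, hB, Pi.add_apply, cycleVector]
    by_cases hm1 : (e : Sym2 V) ∈ c1.edges <;>
      by_cases hm2 : (e : Sym2 V) ∈ c2.edges <;>
      simp only [hm1, hm2, if_true, if_false, not_true, not_false_iff,
        and_true, and_false, true_and, false_and, true_or, or_true, or_false,
        false_or, and_self, not_and, true_implies, false_implies] <;> decide
  have hABcard : (A ∪ B).card + (A ∩ B).card = A.card + B.card :=
    Finset.card_union_add_card_inter A B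
  have hsdiffcard : ((A ∪ B) \ (A ∩ B)).card + (A ∩ B).card = (A ∪ B).card :=
    Finset.card_sdiff_add_card_eq_card (fun e he =>
      Finset.mem_union_left _ (Finset.mem_inter.mp he).1)
  -- the number of common edges
  have hIcard : ({e | e ∈ c1.edges} ∩ {e | e ∈ c2.edges}).ncard = (A ∩ B).card := by
    have himg : {e | e ∈ c1.edges} ∩ {e | e ∈ c2.edges}
        = Subtype.val '' ((A ∩ B : Finset G.edgeSet) : Set G.edgeSet) := by
      ext e
      simp only [Set.mem_inter_iff, Set.mem_setOf_eq, Set.mem_image,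
        Finset.coe_inter, Finset.mem_coe, Finset.mem_inter, hA, hB,
        Finset.mem_filter, Finset.mem_univ, true_and]
      constructor
      · rintro ⟨he1, he2⟩
        exact ⟨⟨e, Walk.edges_subset_edgeSet c1 he1⟩, ⟨⟨he1, he2⟩, rfl⟩⟩
      · rintro ⟨x, ⟨hx1, hx2⟩, rfl⟩
        exact ⟨hx1, hx2⟩
    rw [himg, Set.ncard_image_of_injOn Subtype.val_injective.injOn, Set.ncard_coe_finset]
  -- peel the symmetric difference into cycles
  obtain ⟨L, hL1, hL2, hL3⟩ := peel_aux (Finset.univ.filter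
    fun e => (cycleVector G c1 + cycleVector G c2) e ≠ 0).card
    (cycleVector G c1 + cycleVector G c2) hzmem le_rfl
  -- the coordinates of the symmetric difference at idx1 and idx2 are both 1
  have hmzrepr : ∀ j : P, b.repr ⟨cycleVector G c1 + cycleVector G c2, hzmem⟩ j
      = b.repr ⟨cycleVector G c1, m1mem⟩ j + b.repr ⟨cycleVector G c2, m2mem⟩ j := by
    intro j
    have hsplit : (⟨cycleVector G c1 + cycleVector G c2, hzmem⟩ : cycleSpace G)
        = ⟨cycleVector G c1, m1mem⟩ + ⟨cycleVector G c2, m2mem⟩ := Subtype.ext rfl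
    rw [hsplit, map_add, Finsupp.add_apply]
  have hz1 : b.repr ⟨cycleVector G c1 + cycleVector G c2, hzmem⟩ idx1 = 1 := by
    rw [hmzrepr idx1, hΦprim u1 c1 h1 _ rfl idx1, hΦprim u2 c2 h2 _ rfl idx1,
      if_pos rfl, if_neg (show ¬ (⟨cycleVector G c2, ⟨u2, c2, h2, rfl⟩⟩ : P) = idx1
        from fun hcon => hidxne (hcon.symm.trans (Subtype.ext rfl)))]
    decide
  have hz2 : b.repr ⟨cycleVector G c1 + cycleVector G c2, hzmem⟩ idx2 = 1 := by
    rw [hmzrepr idx2, hΦprim u1 c1 h1 _ rfl idx2, hΦprim u2 c2 h2 _ rfl idx2,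
      if_neg (show ¬ (⟨cycleVector G c1, ⟨u1, c1, h1, rfl⟩⟩ : P) = idx2
        from fun hcon => hidxne ((Subtype.ext rfl : idx1 = ⟨cycleVector G c1,
          ⟨u1, c1, h1, rfl⟩⟩).trans hcon)), if_pos rfl]
    decide
  -- coordinates through the decomposition
  have hrs := repr_sum L hL1 ⟨cycleVector G c1 + cycleVector G c2, hzmem⟩ hL2
  obtain ⟨x1, hx1L, hx1ne⟩ := exists_ne L _ (by rw [← hrs idx1, hz1]; decide)
  obtain ⟨x2, hx2L, hx2ne⟩ := exists_ne L _ (by rw [← hrs idx2, hz2]; decide)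
  have hx1c : x1.snd.IsCycle := hL1 x1 hx1L
  have hx2c : x2.snd.IsCycle := hL1 x2 hx2L
  rw [dif_pos hx1c] at hx1ne
  rw [dif_pos hx2c] at hx2ne
  -- length bound facts
  have hx1lb : x1.snd.length ≤ (L.map fun x => x.snd.length).sum :=
    List.single_le_sum (fun x _ => Nat.zero_le x) _
      (List.mem_map.mpr ⟨x1, hx1L, rfl⟩)
  by_cases hx12 : x1 = x2
  · -- one cycle carries both coordinates
    subst hx12
    have hcl := claim2 x1.snd.length x1.fst x1.snd hx1c le_rfl
      ⟨cycleVector G x1.snd, cycleVector_mem_cycleSpace hx1c.isCircuit.isTrail⟩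
      rfl hx1ne hx2ne
    have k1 := claim1 x1.snd.length x1.fst x1.snd hx1c le_rfl
      ⟨cycleVector G x1.snd, cycleVector_mem_cycleSpace hx1c.isCircuit.isTrail⟩
      rfl idx1 hx1ne
    rw [hzfilter] at hL3
    omega
  · -- two distinct cycles carry the coordinates
    have k1 := claim1 x1.snd.length x1.fst x1.snd hx1c le_rfl
      ⟨cycleVector G x1.snd, cycleVector_mem_cycleSpace hx1c.isCircuit.isTrail⟩
      rfl idx1 hx1ne
    have k2 := claim1 x2.snd.length x2.fst x2.snd hx2c le_rfl
      ⟨cycleVector G x2.snd, cycleVector_mem_cycleSpace hx2c.isCircuit.isTrail⟩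
      rfl idx2 hx2ne
    rw [hlenP1] at k1
    rw [hlenP2] at k2
    have h2sum := two_mem_sum L x1 x2 hx1L hx2L hx12
    rw [hzfilter] at hL3
    omega

end RingGraphs
end
end

section
/- Let G be a finite simple graph that satisfies the primitive cycle property and contains no subdivision of K4 as a subgraph. Then for any two non-adjacent vertices x and y of G, there are at most two internally vertex-disjoint paths joining x and y. -/
open SimpleGraph Finset
open scoped Classical

noncomputable section

namespace RingGraphs

variable {V : Type*}

/-- `G` contains a subdivision of `H` as a subgraph: there is an injection `f` of the
vertices of `H` into `V` (the branch vertices) and a family of internally disjoint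
paths of `G` joining the images of the ends of each edge of `H`. -/
def ContainsSubdivision {W : Type*} (H : SimpleGraph W) (G : SimpleGraph V) : Prop :=
  ∃ (f : W ↪ V) (P : ∀ ⦃u v : W⦄, H.Adj u v → G.Walk (f u) (f v)),
    (∀ ⦃u v : W⦄ (h : H.Adj u v), (P h).IsPath) ∧
    (∀ ⦃u v : W⦄ (h : H.Adj u v), P h.symm = (P h).reverse) ∧
    (∀ ⦃u v : W⦄ (h : H.Adj u v) (w : W), f w ∈ (P h).support → w = u ∨ w = v) ∧
    (∀ ⦃u v u' v' : W⦄ (h : H.Adj u v) (h' : H.Adj u' v'), s(u, v) ≠ s(u', v') →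
      ∀ z, z ∈ (P h).support → z ∈ (P h').support →
        (z = f u ∨ z = f v) ∧ (z = f u' ∨ z = f v'))

/-- Two walks with the same endpoints are internally (vertex) disjoint if they share
no vertices other than their common endpoints. -/
def InternallyDisjoint {G : SimpleGraph V} {x y : V} (p q : G.Walk x y) : Prop :=
  ∀ z, z ∈ p.support → z ∈ q.support → z = x ∨ z = y

/-- `AtMostTwoDisjointPaths G x y` : there do not exist three pairwise distinct, pairwise
internally vertex-disjoint paths of `G` joining `x` and `y`. -/
def AtMostTwoDisjointPaths (G : SimpleGraph V) (x y : V) : Prop :=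
  ¬ ∃ p₁ p₂ p₃ : G.Walk x y, p₁.IsPath ∧ p₂.IsPath ∧ p₃.IsPath ∧
      p₁ ≠ p₂ ∧ p₁ ≠ p₃ ∧ p₂ ≠ p₃ ∧
      InternallyDisjoint p₁ p₂ ∧ InternallyDisjoint p₁ p₃ ∧ InternallyDisjoint p₂ p₃

section AuxLemmas
variable {G : SimpleGraph V}

lemma eq_of_mem_take_drop [DecidableEq V] {x y a z : V} {p : G.Walk x y} (hp : p.IsPath)
    (ha : a ∈ p.support) (h1 : z ∈ (p.takeUntil a ha).support)
    (h2 : z ∈ (p.dropUntil a ha).support) : z = a := by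
  have hs : p.support = (p.takeUntil a ha).support ++ (p.dropUntil a ha).support.tail := by
    rw [← Walk.support_append, p.take_spec ha]
  by_contra hne
  have h2' : z ∈ (p.dropUntil a ha).support.tail := by
    rw [(p.dropUntil a ha).support_eq_cons] at h2
    exact (List.mem_cons.mp h2).resolve_left hne
  have hnd := (Walk.isPath_def _).mp hp
  rw [hs, List.nodup_append] at hnd
  exact hnd.2.2 z h1 z h2' rfl

lemma end_not_mem_take [DecidableEq V] {x y a : V} {p : G.Walk x y} (hp : p.IsPath)
    (ha : a ∈ p.support) (hay : a ≠ y) : y ∉ (p.takeUntil a ha).support := fun h =>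
  hay.symm (eq_of_mem_take_drop hp ha h (Walk.end_mem_support _))

lemma start_not_mem_drop [DecidableEq V] {x y a : V} {p : G.Walk x y} (hp : p.IsPath)
    (ha : a ∈ p.support) (hax : a ≠ x) : x ∉ (p.dropUntil a ha).support := fun h =>
  hax.symm (eq_of_mem_take_drop hp ha (Walk.start_mem_support _) h)

lemma length_take_add_drop [DecidableEq V] {x y a : V} (p : G.Walk x y) (ha : a ∈ p.support) :
    (p.takeUntil a ha).length + (p.dropUntil a ha).length = p.length := by
  rw [← Walk.length_append, p.take_spec ha]

lemma edges_of_length_one {u v : V} (p : G.Walk u v) (h : p.length = 1) :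
    p.edges = [s(u, v)] := by
  cases p with
  | nil => simp at h
  | cons h' q =>
    cases q with
    | nil => simp
    | cons h'' r => simp [Walk.length_cons] at h

lemma loop_path_nil {u : V} {p : G.Walk u u} (hp : p.IsPath) : p = Walk.nil :=
  Walk.isPath_iff_eq_nil.mp hp

lemma two_le_length {x y : V} {p : G.Walk x y} (hp : p.IsPath) (hxy : x ≠ y)
    (hna : ¬ G.Adj x y) : 2 ≤ p.length := by
  rcases Nat.lt_or_ge p.length 2 with h | h
  · interval_cases hl : p.length
    · exact absurd (Walk.eq_of_length_eq_zero hl) hxy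
    · exact absurd (Walk.adj_of_mem_edges p (by rw [edges_of_length_one p hl]; simp)) hna
  · exact h

lemma exists_internal {x y : V} {p : G.Walk x y} (hp : p.IsPath) (h2 : 2 ≤ p.length) :
    ∃ c, c ∈ p.support ∧ c ≠ x ∧ c ≠ y ∧ s(x, c) ∈ p.edges := by
  cases p with
  | nil => simp at h2
  | cons h q =>
    rename_i c
    refine ⟨c, by simp, h.ne', ?_, by simp⟩
    rintro rfl
    have := loop_path_nil hp.of_cons
    subst this
    simp [Walk.length_cons] at h2

/-- head-chord case: if `Adj w v`, `v ∈ q.support`, and `s(w,v) ∉ q.edges`,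
we can shorten. -/
lemma shorten_head [DecidableEq V] {w y v : V} {q : G.Walk w y} (hq : q.IsPath)
    (hv : v ∈ q.support) (hadj : G.Adj w v) (hne : s(w, v) ∉ q.edges) :
    ∃ q' : G.Walk w y, q'.IsPath ∧ (∀ z ∈ q'.support, z ∈ q.support) ∧ q'.length < q.length := by
  refine ⟨Walk.cons hadj (q.dropUntil v hv), ?_, ?_, ?_⟩
  · rw [Walk.cons_isPath_iff]
    refine ⟨hq.dropUntil hv, fun h => ?_⟩
    exact hadj.ne (eq_of_mem_take_drop hq hv (Walk.start_mem_support _) h)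
  · intro z hz
    rw [Walk.support_cons, List.mem_cons] at hz
    rcases hz with hz | hz
    · exact hz ▸ Walk.start_mem_support q
    · exact Walk.support_dropUntil_subset q hv hz
  · have hlen := length_take_add_drop q hv
    have h2 : 2 ≤ (q.takeUntil v hv).length := by
      rcases Nat.lt_or_ge (q.takeUntil v hv).length 2 with h | h
      · interval_cases hl : (q.takeUntil v hv).length
        · exact absurd (Walk.eq_of_length_eq_zero hl) hadj.ne
        · exact absurd (Walk.edges_takeUntil_subset q hv
            (by rw [edges_of_length_one _ hl]; simp)) hne
      · exact h
    simp only [Walk.length_cons]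
    omega

lemma shorten [DecidableEq V] {w y : V} (q : G.Walk w y) (hq : q.IsPath)
    (H : ∃ u v, u ∈ q.support ∧ v ∈ q.support ∧ G.Adj u v ∧ s(u, v) ∉ q.edges) :
    ∃ q' : G.Walk w y, q'.IsPath ∧ (∀ z ∈ q'.support, z ∈ q.support) ∧ q'.length < q.length := by
  induction q with
  | nil =>
    obtain ⟨u, v, hu, hv, hadj, -⟩ := H
    simp only [Walk.support_nil, List.mem_singleton] at hu hv
    exact absurd (hu ▸ hv ▸ hadj) (G.irrefl)
  | cons h r ih =>
    obtain ⟨u, v, hu, hv, hadj, hne⟩ := H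
    rename_i w' c y'
    by_cases huw : u = w'
    · subst huw
      exact shorten_head hq hv hadj hne
    by_cases hvw : v = w'
    · subst hvw
      rw [Sym2.eq_swap] at hne
      exact shorten_head hq hu hadj.symm hne
    · have hu' : u ∈ r.support := by
        rw [Walk.support_cons, List.mem_cons] at hu; tauto
      have hv' : v ∈ r.support := by
        rw [Walk.support_cons, List.mem_cons] at hv; tauto
      have hne' : s(u, v) ∉ r.edges := fun h' => hne (by rw [Walk.edges_cons]; exact .tail _ h')
      obtain ⟨r', hr'p, hr's, hr'l⟩ := ih hq.of_cons ⟨u, v, hu', hv', hadj, hne'⟩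
      refine ⟨Walk.cons h r', ?_, ?_, ?_⟩
      · rw [Walk.cons_isPath_iff]
        exact ⟨hr'p, fun hw => ((Walk.cons_isPath_iff h r).mp hq).2 (hr's _ hw)⟩
      · intro z hz
        rw [Walk.support_cons, List.mem_cons] at hz ⊢
        rcases hz with hz | hz
        · exact Or.inl hz
        · exact Or.inr (hr's _ hz)
      · simpa [Walk.length_cons] using hr'l

lemma isCycle_append_reverse {x y : V} {p q : G.Walk x y} (hp : p.IsPath) (hq : q.IsPath)
    (hd : ∀ z, z ∈ p.support → z ∈ q.support → z = x ∨ z = y)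
    (hxy : x ≠ y) (hna : ¬ G.Adj x y) : (p.append q.reverse).IsCycle := by
  rw [Walk.isCycle_def]
  refine ⟨?_, ?_, ?_⟩
  · rw [Walk.isTrail_def, Walk.edges_append, List.nodup_append]
    refine ⟨hp.isTrail.edges_nodup, by
      rw [Walk.edges_reverse]; exact List.nodup_reverse.mpr hq.isTrail.edges_nodup, ?_⟩
    intro e he e' he' hee'
    subst hee'
    rw [Walk.edges_reverse, List.mem_reverse] at he'
    induction e with
    | h u v =>
      have hadj := Walk.adj_of_mem_edges p he
      have hu : u = x ∨ u = y := hd u (Walk.fst_mem_support_of_mem_edges p he)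
        (Walk.fst_mem_support_of_mem_edges q he')
      have hv : v = x ∨ v = y := hd v (Walk.snd_mem_support_of_mem_edges p he)
        (Walk.snd_mem_support_of_mem_edges q he')
      rcases hu with rfl | rfl <;> rcases hv with rfl | rfl
      · exact G.irrefl hadj
      · exact hna hadj
      · exact hna hadj.symm
      · exact G.irrefl hadj
  · intro hnil
    have h := congrArg Walk.length hnil
    rw [Walk.length_append] at h
    simp only [Walk.length_nil] at h
    have hp0 : p.length = 0 := by omega
    exact hxy (Walk.eq_of_length_eq_zero hp0)
  · have hts : (p.append q.reverse).support.tail = p.support.tail ++ q.reverse.support.tail := by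
      rw [Walk.support_append, p.support_eq_cons]
      simp
    rw [hts, List.nodup_append]
    have hpn := (Walk.isPath_def _).mp hp
    have hqn := (Walk.isPath_def _).mp hq.reverse
    rw [p.support_eq_cons, List.nodup_cons] at hpn
    rw [q.reverse.support_eq_cons, List.nodup_cons] at hqn
    refine ⟨hpn.2, hqn.2, fun z hz z' hz' hzz => ?_⟩
    subst hzz
    have hzx : z ≠ x := fun h => hpn.1 (h ▸ hz)
    have hzy : z ≠ y := fun h => hqn.1 (h ▸ hz')
    have hzp : z ∈ p.support := by rw [p.support_eq_cons]; exact List.mem_cons_of_mem _ hz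
    have hzq : z ∈ q.support := by
      have : z ∈ q.reverse.support := by
        rw [q.reverse.support_eq_cons]; exact List.mem_cons_of_mem _ hz'
      rwa [Walk.support_reverse, List.mem_reverse] at this
    rcases hd z hzp hzq with h | h
    · exact hzx h
    · exact hzy h

lemma mem_support_append_iff {x y : V} (p q : G.Walk x y) (z : V) :
    z ∈ (p.append q.reverse).support ↔ z ∈ p.support ∨ z ∈ q.support := by
  constructor
  · intro hz
    rw [Walk.support_append] at hz
    rcases List.mem_append.mp hz with h | h
    · exact Or.inl h
    · refine Or.inr ?_
      have : z ∈ q.reverse.support := by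
        rw [q.reverse.support_eq_cons]; exact List.mem_cons_of_mem _ h
      rwa [Walk.support_reverse, List.mem_reverse] at this
  · intro hz
    rw [Walk.support_append, List.mem_append]
    rcases hz with h | h
    · exact Or.inl h
    · by_cases hzy : z = y
      · exact Or.inl (hzy ▸ p.end_mem_support)
      · refine Or.inr ?_
        have : z ∈ q.reverse.support := by rw [Walk.support_reverse, List.mem_reverse]; exact h
        rw [q.reverse.support_eq_cons] at this
        rcases List.mem_cons.mp this with h' | h'
        · exact absurd h' hzy
        · exact h'

lemma mem_edges_append_iff {x y : V} (p q : G.Walk x y) (e : Sym2 V) :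
    e ∈ (p.append q.reverse).edges ↔ e ∈ p.edges ∨ e ∈ q.edges := by
  rw [Walk.edges_append, List.mem_append, Walk.edges_reverse, List.mem_reverse]

/-- Primitivity of the cycle made of two internally disjoint induced paths with no
cross chords. -/
lemma primCycle_of {x y : V} {p q : G.Walk x y} (hp : p.IsPath) (hq : q.IsPath)
    (hd : ∀ z, z ∈ p.support → z ∈ q.support → z = x ∨ z = y)
    (hxy : x ≠ y) (hna : ¬ G.Adj x y)
    (hip : ∀ u v, u ∈ p.support → v ∈ p.support → G.Adj u v → s(u, v) ∈ p.edges)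
    (hiq : ∀ u v, u ∈ q.support → v ∈ q.support → G.Adj u v → s(u, v) ∈ q.edges)
    (hcross : ∀ u v, u ∈ p.support → v ∈ q.support →
      u ≠ x → u ≠ y → v ≠ x → v ≠ y → ¬ G.Adj u v) :
    IsPrimitiveCycle G (p.append q.reverse) := by
  refine ⟨isCycle_append_reverse hp hq hd hxy hna, fun u v hu hv hadj => ?_⟩
  rw [mem_support_append_iff] at hu hv
  rw [mem_edges_append_iff]
  -- helper: resolve mixed case
  have endp : ∀ w, w = x ∨ w = y → w ∈ p.support ∧ w ∈ q.support := by
    rintro w (rfl | rfl)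
    · exact ⟨p.start_mem_support, q.start_mem_support⟩
    · exact ⟨p.end_mem_support, q.end_mem_support⟩
  rcases hu with hu | hu <;> rcases hv with hv | hv
  · exact Or.inl (hip u v hu hv hadj)
  · -- u ∈ p, v ∈ q
    by_cases hux : u = x ∨ u = y
    · exact Or.inr (hiq u v (endp u hux).2 hv hadj)
    · by_cases hvx : v = x ∨ v = y
      · exact Or.inl (hip u v hu (endp v hvx).1 hadj)
      · push_neg at hux hvx
        exact absurd hadj (hcross u v hu hv hux.1 hux.2 hvx.1 hvx.2)
  · -- u ∈ q, v ∈ p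
    by_cases hux : u = x ∨ u = y
    · exact Or.inl (hip u v (endp u hux).1 hv hadj)
    · by_cases hvx : v = x ∨ v = y
      · exact Or.inr (hiq u v hu (endp v hvx).2 hadj)
      · push_neg at hux hvx
        rw [Sym2.eq_swap]
        exact absurd hadj.symm (hcross v u hv hu hvx.1 hvx.2 hux.1 hux.2)
  · exact Or.inr (hiq u v hu hv hadj)

lemma exists_two_edges {x y : V} {p : G.Walk x y} (hp : p.IsTrail) (h2 : 2 ≤ p.length) :
    ∃ e₁ e₂, e₁ ∈ p.edges ∧ e₂ ∈ p.edges ∧ e₁ ≠ e₂ := by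
  cases p with
  | nil => simp at h2
  | cons h q =>
    cases q with
    | nil => simp [Walk.length_cons] at h2
    | cons h' r =>
      rename_i c d
      have hnd := (Walk.isTrail_def _).mp hp
      rw [Walk.edges_cons, List.nodup_cons] at hnd
      refine ⟨s(x, c), s(c, d), by simp, by simp, fun he => hnd.1 ?_⟩
      rw [he]; simp

def K4g (x y a b : V) : Fin 4 → V
  | 0 => x | 1 => y | 2 => a | 3 => b

@[simp] lemma K4g_0 (x y a b : V) : K4g x y a b 0 = x := rfl
@[simp] lemma K4g_1 (x y a b : V) : K4g x y a b 1 = y := rfl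
@[simp] lemma K4g_2 (x y a b : V) : K4g x y a b 2 = a := rfl
@[simp] lemma K4g_3 (x y a b : V) : K4g x y a b 3 = b := rfl

def K4W {x y a b : V} (A : G.Walk x a) (A' : G.Walk a y) (B : G.Walk x b)
    (B' : G.Walk b y) (C : G.Walk x y) (hab : G.Adj a b) :
    ∀ u v : Fin 4, G.Walk (K4g x y a b u) (K4g x y a b v)
  | 0, 0 => Walk.nil
  | 0, 1 => C
  | 0, 2 => A
  | 0, 3 => B
  | 1, 0 => C.reverse
  | 1, 1 => Walk.nil
  | 1, 2 => A'.reverse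
  | 1, 3 => B'.reverse
  | 2, 0 => A.reverse
  | 2, 1 => A'
  | 2, 2 => Walk.nil
  | 2, 3 => Walk.cons hab Walk.nil
  | 3, 0 => B.reverse
  | 3, 1 => B'
  | 3, 2 => (Walk.cons hab Walk.nil).reverse
  | 3, 3 => Walk.nil

section
variable {x y a b : V} {A : G.Walk x a} {A' : G.Walk a y} {B : G.Walk x b}
    {B' : G.Walk b y} {C : G.Walk x y} {hab : G.Adj a b}

@[simp] lemma K4W_01 : K4W A A' B B' C hab 0 1 = C := rfl
@[simp] lemma K4W_02 : K4W A A' B B' C hab 0 2 = A := rfl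
@[simp] lemma K4W_03 : K4W A A' B B' C hab 0 3 = B := rfl
@[simp] lemma K4W_10 : K4W A A' B B' C hab 1 0 = C.reverse := rfl
@[simp] lemma K4W_12 : K4W A A' B B' C hab 1 2 = A'.reverse := rfl
@[simp] lemma K4W_13 : K4W A A' B B' C hab 1 3 = B'.reverse := rfl
@[simp] lemma K4W_20 : K4W A A' B B' C hab 2 0 = A.reverse := rfl
@[simp] lemma K4W_21 : K4W A A' B B' C hab 2 1 = A' := rfl
@[simp] lemma K4W_23 : K4W A A' B B' C hab 2 3 = Walk.cons hab Walk.nil := rfl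
@[simp] lemma K4W_30 : K4W A A' B B' C hab 3 0 = B.reverse := rfl
@[simp] lemma K4W_31 : K4W A A' B B' C hab 3 1 = B' := rfl
@[simp] lemma K4W_32 : K4W A A' B B' C hab 3 2 = (Walk.cons hab Walk.nil).reverse := rfl

end

set_option maxHeartbeats 2000000 in
lemma containsSubdivisionK4 {x y a b : V} {A : G.Walk x a} {A' : G.Walk a y} {B : G.Walk x b}
    {B' : G.Walk b y} {C : G.Walk x y} (hab : G.Adj a b)
    (hA : A.IsPath) (hA' : A'.IsPath) (hB : B.IsPath) (hB' : B'.IsPath) (hC : C.IsPath)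
    (hxy : x ≠ y) (hax : a ≠ x) (hay : a ≠ y) (hbx : b ≠ x) (hby : b ≠ y) (hba : a ≠ b)
    (hAA' : ∀ z, z ∈ A.support → z ∈ A'.support → z = a)
    (hBB' : ∀ z, z ∈ B.support → z ∈ B'.support → z = b)
    (hyA : y ∉ A.support) (hxA' : x ∉ A'.support) (hyB : y ∉ B.support) (hxB' : x ∉ B'.support)
    (h12 : ∀ z, (z ∈ A.support ∨ z ∈ A'.support) → (z ∈ B.support ∨ z ∈ B'.support) →
      z = x ∨ z = y)
    (h13 : ∀ z, (z ∈ A.support ∨ z ∈ A'.support) → z ∈ C.support → z = x ∨ z = y)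
    (h23 : ∀ z, (z ∈ B.support ∨ z ∈ B'.support) → z ∈ C.support → z = x ∨ z = y) :
    ContainsSubdivision (⊤ : SimpleGraph (Fin 4)) G := by
  have hcase : ∀ i : Fin 4, i = 0 ∨ i = 1 ∨ i = 2 ∨ i = 3 := by decide
  -- derived non-membership facts
  have haC : a ∉ C.support := fun h => by
    rcases h13 a (Or.inl A.end_mem_support) h with h' | h'
    exacts [hax h', hay h']
  have hbC : b ∉ C.support := fun h => by
    rcases h23 b (Or.inl B.end_mem_support) h with h' | h'
    exacts [hbx h', hby h']
  have hbA : b ∉ A.support := fun h => by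
    rcases h12 b (Or.inl h) (Or.inl B.end_mem_support) with h' | h'
    exacts [hbx h', hby h']
  have hbA' : b ∉ A'.support := fun h => by
    rcases h12 b (Or.inr h) (Or.inl B.end_mem_support) with h' | h'
    exacts [hbx h', hby h']
  have haB : a ∉ B.support := fun h => by
    rcases h12 a (Or.inl A.end_mem_support) (Or.inl h) with h' | h'
    exacts [hax h', hay h']
  have haB' : a ∉ B'.support := fun h => by
    rcases h12 a (Or.inl A.end_mem_support) (Or.inr h) with h' | h'
    exacts [hax h', hay h']
  -- cross facts
  have FCA : ∀ z, z ∈ C.support → z ∈ A.support → z = x := fun z hz hz' => by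
    rcases h13 z (Or.inl hz') hz with h' | h'
    · exact h'
    · exact absurd (h' ▸ hz') hyA
  have FCA' : ∀ z, z ∈ C.support → z ∈ A'.support → z = y := fun z hz hz' => by
    rcases h13 z (Or.inr hz') hz with h' | h'
    · exact absurd (h' ▸ hz') hxA'
    · exact h'
  have FCB : ∀ z, z ∈ C.support → z ∈ B.support → z = x := fun z hz hz' => by
    rcases h23 z (Or.inl hz') hz with h' | h'
    · exact h'
    · exact absurd (h' ▸ hz') hyB
  have FCB' : ∀ z, z ∈ C.support → z ∈ B'.support → z = y := fun z hz hz' => by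
    rcases h23 z (Or.inr hz') hz with h' | h'
    · exact absurd (h' ▸ hz') hxB'
    · exact h'
  have FAB : ∀ z, z ∈ A.support → z ∈ B.support → z = x := fun z hz hz' => by
    rcases h12 z (Or.inl hz) (Or.inl hz') with h' | h'
    · exact h'
    · exact absurd (h' ▸ hz) hyA
  have FAB' : ∀ z, z ∈ A.support → z ∈ B'.support → False := fun z hz hz' => by
    rcases h12 z (Or.inl hz) (Or.inr hz') with h' | h'
    · exact hxB' (h' ▸ hz')
    · exact hyA (h' ▸ hz)
  have FA'B : ∀ z, z ∈ A'.support → z ∈ B.support → False := fun z hz hz' => by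
    rcases h12 z (Or.inr hz) (Or.inl hz') with h' | h'
    · exact hxA' (h' ▸ hz)
    · exact hyB (h' ▸ hz')
  have FA'B' : ∀ z, z ∈ A'.support → z ∈ B'.support → z = y := fun z hz hz' => by
    rcases h12 z (Or.inr hz) (Or.inr hz') with h' | h'
    · exact absurd (h' ▸ hz) hxA'
    · exact h'
  have FCa : ∀ z, z ∈ C.support → z = a → False := fun z hz h' => haC (h' ▸ hz)
  have FCb : ∀ z, z ∈ C.support → z = b → False := fun z hz h' => hbC (h' ▸ hz)
  have FAb : ∀ z, z ∈ A.support → z = b → False := fun z hz h' => hbA (h' ▸ hz)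
  have FA'b : ∀ z, z ∈ A'.support → z = b → False := fun z hz h' => hbA' (h' ▸ hz)
  have FBa : ∀ z, z ∈ B.support → z = a → False := fun z hz h' => haB (h' ▸ hz)
  have FB'a : ∀ z, z ∈ B'.support → z = a → False := fun z hz h' => haB' (h' ▸ hz)
  -- injectivity
  have hginj : Function.Injective (K4g x y a b) := by
    intro i j hij
    rcases hcase i with rfl | rfl | rfl | rfl <;> rcases hcase j with rfl | rfl | rfl | rfl <;>
      first
        | rfl
        | (simp only [K4g_0, K4g_1, K4g_2, K4g_3] at hij
           first
             | exact absurd hij hxy | exact absurd hij hxy.symm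
             | exact absurd hij hax | exact absurd hij hax.symm
             | exact absurd hij hay | exact absurd hij hay.symm
             | exact absurd hij hbx | exact absurd hij hbx.symm
             | exact absurd hij hby | exact absurd hij hby.symm
             | exact absurd hij hba | exact absurd hij hba.symm)
  have hedge : (Walk.cons hab Walk.nil).IsPath := by
    rw [Walk.isPath_def]; simp [hba]
  refine ⟨⟨K4g x y a b, hginj⟩, fun u v _ => K4W A A' B B' C hab u v, ?_, ?_, ?_, ?_⟩
  · -- paths
    intro u v h
    rcases hcase u with rfl | rfl | rfl | rfl <;> rcases hcase v with rfl | rfl | rfl | rfl <;>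
      first
        | exact absurd rfl h.ne
        | exact hC | exact hC.reverse
        | exact hA | exact hA.reverse
        | exact hA' | exact hA'.reverse
        | exact hB | exact hB.reverse
        | exact hB' | exact hB'.reverse
        | exact hedge | exact hedge.reverse
  · -- reverses
    intro u v h
    rcases hcase u with rfl | rfl | rfl | rfl <;> rcases hcase v with rfl | rfl | rfl | rfl <;>
      first
        | exact absurd rfl h.ne
        | rfl
        | exact (Walk.reverse_reverse _).symm
  · -- branch vertices
    intro u v h w hw
    simp only [Function.Embedding.coeFn_mk] at hw
    rcases hcase u with rfl | rfl | rfl | rfl <;> rcases hcase v with rfl | rfl | rfl | rfl <;>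
      first
        | exact absurd rfl h.ne
        | (rcases hcase w with rfl | rfl | rfl | rfl <;>
            simp only [K4W_01, K4W_02, K4W_03, K4W_10, K4W_12, K4W_13, K4W_20, K4W_21,
              K4W_23, K4W_30, K4W_31, K4W_32, K4g_0, K4g_1, K4g_2, K4g_3,
              Walk.support_reverse, List.mem_reverse, Walk.support_cons, Walk.support_nil,
              List.mem_cons, List.mem_singleton, List.not_mem_nil, or_false] at hw <;>
            first
              | (left; rfl) | (right; rfl)
              | exact absurd hw haC | exact absurd hw hbC
              | exact absurd hw hyA | exact absurd hw hbA
              | exact absurd hw hxA' | exact absurd hw hbA'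
              | exact absurd hw hyB | exact absurd hw haB
              | exact absurd hw hxB' | exact absurd hw haB'
              | (exfalso; rcases hw with hw | hw <;>
                 first
                   | exact hax hw.symm | exact hbx hw.symm
                   | exact hay hw.symm | exact hby hw.symm))
  · -- cross disjointness
    intro u v u' v' h h' hne z hz hz'
    simp only [Function.Embedding.coeFn_mk]
    have fCA := FCA z; have fCA' := FCA' z; have fCB := FCB z; have fCB' := FCB' z
    have fAB := FAB z; have fAB' := FAB' z; have fA'B := FA'B z; have fA'B' := FA'B' z
    have fAA' := hAA' z; have fBB' := hBB' z
    have fCa := FCa z; have fCb := FCb z; have fAb := FAb z; have fA'b := FA'b z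
    have fBa := FBa z; have fB'a := FB'a z
    rcases hcase u with rfl | rfl | rfl | rfl <;> rcases hcase v with rfl | rfl | rfl | rfl <;>
      first
        | exact absurd rfl h.ne
        | (rcases hcase u' with rfl | rfl | rfl | rfl <;>
           rcases hcase v' with rfl | rfl | rfl | rfl <;>
            first
              | exact absurd rfl h'.ne
              | exact absurd rfl hne
              | exact absurd (Sym2.eq_swap) hne
              | (simp only [K4W_01, K4W_02, K4W_03, K4W_10, K4W_12, K4W_13, K4W_20, K4W_21,
                  K4W_23, K4W_30, K4W_31, K4W_32, K4g_0, K4g_1, K4g_2, K4g_3,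
                  Walk.support_reverse, List.mem_reverse, Walk.support_cons, Walk.support_nil,
                  List.mem_cons, List.mem_singleton, List.not_mem_nil, or_false,
                  Function.Embedding.coeFn_mk]
                  at hz hz' ⊢
                 exact ⟨by itauto, by itauto⟩))

lemma k4_of_cross {x y : V} {p q r : G.Walk x y} (hp : p.IsPath) (hq : q.IsPath)
    (hr : r.IsPath) (hxy : x ≠ y)
    (hpq : ∀ z, z ∈ p.support → z ∈ q.support → z = x ∨ z = y)
    (hpr : ∀ z, z ∈ p.support → z ∈ r.support → z = x ∨ z = y)
    (hqr : ∀ z, z ∈ q.support → z ∈ r.support → z = x ∨ z = y)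
    {a b : V} (ha : a ∈ p.support) (hax : a ≠ x) (hay : a ≠ y)
    (hb : b ∈ q.support) (hbx : b ≠ x) (hby : b ≠ y)
    (hab : G.Adj a b) : ContainsSubdivision (⊤ : SimpleGraph (Fin 4)) G := by
  have hba : a ≠ b := by
    intro h
    rcases hpq a ha (h ▸ hb) with h' | h'
    exacts [hax h', hay h']
  have memp : ∀ z, (z ∈ (p.takeUntil a ha).support ∨ z ∈ (p.dropUntil a ha).support) →
      z ∈ p.support := by
    rintro z (h | h)
    · exact p.support_takeUntil_subset ha h
    · exact p.support_dropUntil_subset ha h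
  have memq : ∀ z, (z ∈ (q.takeUntil b hb).support ∨ z ∈ (q.dropUntil b hb).support) →
      z ∈ q.support := by
    rintro z (h | h)
    · exact q.support_takeUntil_subset hb h
    · exact q.support_dropUntil_subset hb h
  exact containsSubdivisionK4 hab (hp.takeUntil ha) (hp.dropUntil ha)
    (hq.takeUntil hb) (hq.dropUntil hb) hr hxy hax hay hbx hby hba
    (fun z h1 h2 => eq_of_mem_take_drop hp ha h1 h2)
    (fun z h1 h2 => eq_of_mem_take_drop hq hb h1 h2)
    (end_not_mem_take hp ha hay) (start_not_mem_drop hp ha hax)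
    (end_not_mem_take hq hb hby) (start_not_mem_drop hq hb hbx)
    (fun z hz hz' => hpq z (memp z hz) (memq z hz'))
    (fun z hz hz' => hpr z (memp z hz) hz')
    (fun z hz hz' => hqr z (memq z hz) hz')



end AuxLemmas

/-- If `G` has the primitive cycle property and contains no subdivision
of `K₄` as a subgraph, then any two non-adjacent vertices of `G` are joined by at most
two internally vertex-disjoint paths. -/
theorem atMostTwoPaths_of_pcp_of_no_K4 [Fintype V] (G : SimpleGraph V)
    (hpcp : PCP G) (hK4 : ¬ ContainsSubdivision (⊤ : SimpleGraph (Fin 4)) G)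
    (x y : V) (hxy : x ≠ y) (hna : ¬ G.Adj x y) :
    AtMostTwoDisjointPaths G x y := by
  rintro ⟨p₁, p₂, p₃, hp₁, hp₂, hp₃, h12, h13, h23, d12, d13, d23⟩
  set Q : ℕ → Prop := fun n => ∃ q₁ q₂ q₃ : G.Walk x y,
    (q₁.IsPath ∧ q₂.IsPath ∧ q₃.IsPath ∧ q₁ ≠ q₂ ∧ q₁ ≠ q₃ ∧ q₂ ≠ q₃ ∧
      InternallyDisjoint q₁ q₂ ∧ InternallyDisjoint q₁ q₃ ∧ InternallyDisjoint q₂ q₃) ∧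
    q₁.length + q₂.length + q₃.length = n with hQdef
  have hQ : ∃ n, Q n := ⟨_, p₁, p₂, p₃, ⟨hp₁, hp₂, hp₃, h12, h13, h23, d12, d13, d23⟩, rfl⟩
  obtain ⟨q₁, q₂, q₃, ⟨hq₁, hq₂, hq₃, e12, e13, e23, D12, D13, D23⟩, hsum⟩ := Nat.find_spec hQ
  -- key : any first coordinate of a minimal triple is induced
  have key : ∀ q₁' q₂' q₃' : G.Walk x y, q₁'.IsPath → q₂'.IsPath → q₃'.IsPath →
      q₁' ≠ q₂' → q₁' ≠ q₃' → q₂' ≠ q₃' →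
      InternallyDisjoint q₁' q₂' → InternallyDisjoint q₁' q₃' → InternallyDisjoint q₂' q₃' →
      q₁'.length + q₂'.length + q₃'.length = Nat.find hQ →
      ∀ u v, u ∈ q₁'.support → v ∈ q₁'.support → G.Adj u v → s(u, v) ∈ q₁'.edges := by
    intro r₁ r₂ r₃ h₁ h₂ h₃ ne12 ne13 ne23 id12 id13 id23 hlen u v hu hv hadj
    by_contra hne
    obtain ⟨r', hr'p, hr's, hr'l⟩ := shorten r₁ h₁ ⟨u, v, hu, hv, hadj, hne⟩
    obtain ⟨c, hc, hcx, hcy, -⟩ := exists_internal hr'p (two_le_length hr'p hxy hna)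
    have hcr₁ : c ∈ r₁.support := hr's c hc
    have ne12' : r' ≠ r₂ := by
      intro h; subst h
      rcases id12 c hcr₁ hc with h' | h'
      exacts [hcx h', hcy h']
    have ne13' : r' ≠ r₃ := by
      intro h; subst h
      rcases id13 c hcr₁ hc with h' | h'
      exacts [hcx h', hcy h']
    have hQm : Q (r'.length + r₂.length + r₃.length) :=
      ⟨r', r₂, r₃, ⟨hr'p, h₂, h₃, ne12', ne13', ne23,
        fun z hz hz' => id12 z (hr's z hz) hz',
        fun z hz hz' => id13 z (hr's z hz) hz', id23⟩, rfl⟩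
    exact Nat.find_min hQ (by omega) hQm
  have ind₁ := key q₁ q₂ q₃ hq₁ hq₂ hq₃ e12 e13 e23 D12 D13 D23 hsum
  have ind₂ := key q₂ q₁ q₃ hq₂ hq₁ hq₃ e12.symm e23 e13
    (fun z hz hz' => D12 z hz' hz) D23 D13 (by omega)
  have ind₃ := key q₃ q₂ q₁ hq₃ hq₂ hq₁ e23.symm e13.symm e12.symm
    (fun z hz hz' => D23 z hz' hz) (fun z hz hz' => D13 z hz' hz)
    (fun z hz hz' => D12 z hz' hz) (by omega)
  by_cases hcross : ∃ u v, G.Adj u v ∧ u ≠ x ∧ u ≠ y ∧ v ≠ x ∧ v ≠ y ∧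
      ((u ∈ q₁.support ∧ v ∈ q₂.support) ∨ (u ∈ q₁.support ∧ v ∈ q₃.support) ∨
       (u ∈ q₂.support ∧ v ∈ q₃.support))
  · obtain ⟨u, v, hadj, hux, huy, hvx, hvy, hc⟩ := hcross
    rcases hc with ⟨h1, h2⟩ | ⟨h1, h2⟩ | ⟨h1, h2⟩
    · exact hK4 (k4_of_cross hq₁ hq₂ hq₃ hxy D12 D13 D23 h1 hux huy h2 hvx hvy hadj)
    · exact hK4 (k4_of_cross hq₁ hq₃ hq₂ hxy D13 D12
        (fun z hz hz' => D23 z hz' hz) h1 hux huy h2 hvx hvy hadj)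
    · exact hK4 (k4_of_cross hq₂ hq₃ hq₁ hxy D23
        (fun z hz hz' => D12 z hz' hz) (fun z hz hz' => D13 z hz' hz)
        h1 hux huy h2 hvx hvy hadj)
  · have nc12 : ∀ u v, u ∈ q₁.support → v ∈ q₂.support →
        u ≠ x → u ≠ y → v ≠ x → v ≠ y → ¬ G.Adj u v := fun u v h1 h2 hux huy hvx hvy hadj =>
      hcross ⟨u, v, hadj, hux, huy, hvx, hvy, Or.inl ⟨h1, h2⟩⟩
    have nc13 : ∀ u v, u ∈ q₁.support → v ∈ q₃.support →
        u ≠ x → u ≠ y → v ≠ x → v ≠ y → ¬ G.Adj u v := fun u v h1 h2 hux huy hvx hvy hadj =>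
      hcross ⟨u, v, hadj, hux, huy, hvx, hvy, Or.inr (Or.inl ⟨h1, h2⟩)⟩
    have hprim₁₂ := primCycle_of hq₁ hq₂ D12 hxy hna ind₁ ind₂ nc12
    have hprim₁₃ := primCycle_of hq₁ hq₃ D13 hxy hna ind₁ ind₃ nc13
    obtain ⟨c, hc, hcx, hcy, hce⟩ := exists_internal hq₂ (two_le_length hq₂ hxy hna)
    have hne_sets : {e | e ∈ (q₁.append q₂.reverse).edges} ≠
        {e | e ∈ (q₁.append q₃.reverse).edges} := by
      intro hset
      have h1 : s(x, c) ∈ {e | e ∈ (q₁.append q₂.reverse).edges} :=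
        (mem_edges_append_iff q₁ q₂ _).mpr (Or.inr hce)
      rw [hset] at h1
      rcases (mem_edges_append_iff q₁ q₃ _).mp h1 with h' | h'
      · rcases D12 c (Walk.snd_mem_support_of_mem_edges q₁ h') hc with h'' | h''
        exacts [hcx h'', hcy h'']
      · rcases D23 c hc (Walk.snd_mem_support_of_mem_edges q₃ h') with h'' | h''
        exacts [hcx h'', hcy h'']
    obtain ⟨e₁, e₂, he₁, he₂, hee⟩ := exists_two_edges hq₁.isTrail (two_le_length hq₁ hxy hna)
    have hcard := hpcp x x _ _ hprim₁₂ hprim₁₃ hne_sets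
    have h2lt : 1 < ({e | e ∈ (q₁.append q₂.reverse).edges} ∩
        {e | e ∈ (q₁.append q₃.reverse).edges}).ncard := by
      rw [Set.one_lt_ncard (Set.toFinite _)]
      refine ⟨e₁, ⟨?_, ?_⟩, e₂, ⟨?_, ?_⟩, hee⟩
      · exact (mem_edges_append_iff q₁ q₂ _).mpr (Or.inl he₁)
      · exact (mem_edges_append_iff q₁ q₃ _).mpr (Or.inl he₁)
      · exact (mem_edges_append_iff q₁ q₂ _).mpr (Or.inl he₂)
      · exact (mem_edges_append_iff q₁ q₃ _).mpr (Or.inl he₂)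
    omega

end RingGraphs
end
end
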